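/- For every transition system T, every theorem of the normal modal logic S4.2 = K+(T)+(4)+(.2) is valid on the general Kripke frame G_{F_T} = (F_T, ⇝, Admiss(CTL)); that is, S4.2 ⊆ MLAR^fin_T. -/

import Mathlib

namespace MLAR

/-- Modal formulas over a countably infinite set of propositional variables (indexed by ℕ). -/
inductive MF : Type where
  | top : MF
  | var : ℕ → MF
  | and : MF → MF → MF
  | neg : MF → MF
  | dia : MF → MF

namespace MF

/-- □φ := ¬◇¬φ -/
def box (φ : MF) : MF := neg (dia (neg φ))

/-- Material implication, definable classically from ∧ and ¬. -/
def imp (φ ψ : MF) : MF := neg (and φ (neg ψ))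

/-- Uniform substitution. -/
def subst (σ : ℕ → MF) : MF → MF
  | top => top
  | var p => σ p
  | and φ ψ => and (subst σ φ) (subst σ ψ)
  | neg φ => neg (subst σ φ)
  | dia φ => dia (subst σ φ)

/-- Satisfaction of a modal formula at a world of a Kripke model. -/
def Sat {W : Type*} (R : W → W → Prop) (V : ℕ → Set W) : MF → W → Prop
  | top, _ => True
  | var p, w => w ∈ V p
  | and φ ψ, w => Sat R V φ w ∧ Sat R V ψ w
  | neg φ, w => ¬ Sat R V φ w
  | dia φ, w => ∃ v, R w v ∧ Sat R V φ v

end MF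

/-- A boolean evaluation: respects ⊤, ∧, ¬, treating variables and ◇-formulas as atoms. -/
def IsPropEval (v : MF → Prop) : Prop :=
  v MF.top ∧ (∀ φ ψ, v (MF.and φ ψ) ↔ (v φ ∧ v ψ)) ∧ (∀ φ, v (MF.neg φ) ↔ ¬ v φ)

/-- Propositional tautologies. -/
def IsTautology (φ : MF) : Prop := ∀ v, IsPropEval v → v φ

/-- The K-axiom □(p→q)→(□p→□q). -/
def axK : MF := (((MF.var 0).imp (MF.var 1)).box).imp (((MF.var 0).box).imp ((MF.var 1).box))

/-- Normal modal logics. -/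
def IsNormal (L : Set MF) : Prop :=
  (∀ φ, IsTautology φ → φ ∈ L) ∧
  axK ∈ L ∧
  (∀ φ ψ, φ ∈ L → φ.imp ψ ∈ L → ψ ∈ L) ∧
  (∀ φ σ, φ ∈ L → φ.subst σ ∈ L) ∧
  (∀ φ, φ ∈ L → φ.box ∈ L)

/-- The smallest normal modal logic containing Γ. -/
def KPlus (Γ : Set MF) : Set MF := ⋂₀ {L | IsNormal L ∧ Γ ⊆ L}

/-- (T) = p → ◇p -/
def axT : MF := (MF.var 0).imp ((MF.var 0).dia)
/-- (4) = ◇◇p → ◇p -/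
def ax4 : MF := ((MF.var 0).dia.dia).imp ((MF.var 0).dia)
/-- (.2) = ◇□p → □◇p -/
def axDot2 : MF := ((MF.var 0).box.dia).imp ((MF.var 0).dia.box)
/-- (.1) = □◇p → ◇□p -/
def axDot1 : MF := ((MF.var 0).dia.box).imp ((MF.var 0).box.dia)
/-- Grzegorczyk axiom □(□(p→□p)→p)→p -/
def axGrz : MF := ((((MF.var 0).imp ((MF.var 0).box)).box.imp (MF.var 0)).box).imp (MF.var 0)

def S4 : Set MF := KPlus {axT, ax4}
def S4Dot2 : Set MF := KPlus {axT, ax4, axDot2}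
def S4Dot1 : Set MF := KPlus {axT, ax4, axDot1}
def S4Dot2Dot1 : Set MF := KPlus {axT, ax4, axDot2, axDot1}
def Grz : Set MF := KPlus {axGrz}

/-- Transition systems over a set AP of atomic propositions. -/
structure TS (AP : Type) : Type 1 where
  State : Type
  rel : State → State → Prop
  init : Set State
  label : State → Set AP
  nonempty : Nonempty State
  serial : ∀ s, ∃ t, rel s t

/-- `f` witnesses that T₁ is an abstraction of T₂. -/
def IsAbstractionMap {AP : Type} (T₁ T₂ : TS AP) (f : T₂.State → T₁.State) : Prop :=
  Function.Surjective f ∧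
  (∀ s, T₁.label (f s) = T₂.label s) ∧
  (∀ a b, T₁.rel a b ↔ ∃ s t, T₂.rel s t ∧ f s = a ∧ f t = b) ∧
  T₁.init = f '' T₂.init

/-- `Abs T₁ T₂` : T₁ is an abstraction of T₂ (written T₁ ⇝ T₂; T₂ is a refinement of T₁). -/
def Abs {AP : Type} (T₁ T₂ : TS AP) : Prop := ∃ f, IsAbstractionMap T₁ T₂ f

mutual
/-- CTL state formulas. -/
inductive CTLs (AP : Type) : Type where
  | top : CTLs AP
  | atom : AP → CTLs AP
  | and : CTLs AP → CTLs AP → CTLs AP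
  | neg : CTLs AP → CTLs AP
  | ex : CTLp AP → CTLs AP
  | al : CTLp AP → CTLs AP
/-- CTL path formulas. -/
inductive CTLp (AP : Type) : Type where
  | next : CTLs AP → CTLp AP
  | untl : CTLs AP → CTLs AP → CTLp AP
end

/-- Infinite paths of a transition system. -/
def TS.IsPath {AP : Type} (T : TS AP) (π : ℕ → T.State) : Prop := ∀ i, T.rel (π i) (π (i + 1))

mutual
/-- Satisfaction of CTL state formulas at states. -/
def CTLs.Sat {AP : Type} (T : TS AP) : CTLs AP → T.State → Prop
  | .top, _ => True
  | .atom a, s => a ∈ T.label s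
  | .and φ ψ, s => CTLs.Sat T φ s ∧ CTLs.Sat T ψ s
  | .neg φ, s => ¬ CTLs.Sat T φ s
  | .ex φ, s => ∃ π, T.IsPath π ∧ π 0 = s ∧ CTLp.Sat T φ π
  | .al φ, s => ∀ π, T.IsPath π → π 0 = s → CTLp.Sat T φ π
/-- Satisfaction of CTL path formulas on paths. -/
def CTLp.Sat {AP : Type} (T : TS AP) : CTLp AP → (ℕ → T.State) → Prop
  | .next φ, π => CTLs.Sat T φ (π 1)
  | .untl φ ψ, π => ∃ j, CTLs.Sat T ψ (π j) ∧ ∀ i, i < j → CTLs.Sat T φ (π i)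
end

/-- A transition system satisfies a CTL state formula iff all its initial states do. -/
def TS.sat {AP : Type} (T : TS AP) (Φ : CTLs AP) : Prop := ∀ s ∈ T.init, CTLs.Sat T Φ s

/-- Admissible valuations on the class C: each variable denotes a CTL-expressible set. -/
def AdmissibleVal {AP : Type} (C : Set (TS AP)) (V : ℕ → Set {S : TS AP // S ∈ C}) : Prop :=
  ∀ p, ∃ Φ : CTLs AP, ∀ S : {S : TS AP // S ∈ C}, S ∈ V p ↔ (S : TS AP).sat Φ

/-- The refinement accessibility relation ⇝ on the class C. -/
def refRel {AP : Type} (C : Set (TS AP)) :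
    {S : TS AP // S ∈ C} → {S : TS AP // S ∈ C} → Prop :=
  fun S₁ S₂ => Abs S₁.1 S₂.1

/-- Validity of a modal formula at a world of the general frame (C, ⇝, Admiss(CTL)). -/
def ValidAt {AP : Type} (C : Set (TS AP)) (φ : MF) (S : {S : TS AP // S ∈ C}) : Prop :=
  ∀ V, AdmissibleVal C V → MF.Sat (refRel C) V φ S

/-- Validity on the general frame (C, ⇝, Admiss(CTL)). -/
def ValidOn {AP : Type} (C : Set (TS AP)) (φ : MF) : Prop := ∀ S, ValidAt C φ S

/-- The class of all finite abstractions of T. -/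
def FinAbs {AP : Type} (T : TS AP) : Set (TS AP) := {S | Finite S.State ∧ Abs S T}

/-- The class of all abstractions of T. -/
def AllAbs {AP : Type} (T : TS AP) : Set (TS AP) := {S | Abs S T}

/-- MLAR^fin_T. -/
def MLARfin {AP : Type} (T : TS AP) : Set MF := {φ | ValidOn (FinAbs T) φ}
/-- MLAR^all_T. -/
def MLARall {AP : Type} (T : TS AP) : Set MF := {φ | ValidOn (AllAbs T) φ}
set_option linter.dupNamespace false in
/-- MLAR on the class of all transition systems over the fixed countably infinite AP = ℕ. -/
def MLAR : Set MF := {φ | ValidOn (Set.univ : Set (TS ℕ)) φ}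

/-- Finite partial functions {0,…,n−1} ⇀ {0,1}. -/
def FPF (n : ℕ) : Type := Fin n → Option Bool

/-- g ≼ h iff h extends g. -/
def FPFle {n : ℕ} (g h : FPF n) : Prop := ∀ i x, g i = some x → h i = some x

/-- The modal logic of all finite partial function posets. -/
def S4FPF : Set MF := {φ | ∀ n : ℕ, ∀ V : ℕ → Set (FPF n), ∀ w, MF.Sat FPFle V φ w}

/-- Admissible-set algebra of a general Kripke frame:
closed under complements and finite (including empty and binary) unions. -/
def IsGeneralFrameAdmiss {W : Type*} (𝒜 : Set (Set W)) : Prop :=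
  (∅ : Set W) ∈ 𝒜 ∧ (∀ A ∈ 𝒜, Aᶜ ∈ 𝒜) ∧ (∀ A ∈ 𝒜, ∀ B ∈ 𝒜, A ∪ B ∈ 𝒜)

/-- Formulas valid at a world of a general Kripke frame (W, R, 𝒜). -/
def GValidAt {W : Type*} (R : W → W → Prop) (𝒜 : Set (Set W)) (φ : MF) (c : W) : Prop :=
  ∀ V : ℕ → Set W, (∀ p, V p ∈ 𝒜) → MF.Sat R V φ c

/-- A is a pure button at c: □(b→□b) and □◇b hold at c under V(b) = A. -/
def PureButton {W : Type*} (R : W → W → Prop) (c : W) (A : Set W) : Prop :=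
  (∀ d, R c d → d ∈ A → ∀ e, R d e → e ∈ A) ∧ (∀ d, R c d → ∃ e, R d e ∧ e ∈ A)

/-- A is a pure weak button at c: □(b→□b) and ◇b hold at c under V(b) = A. -/
def PureWeakButton {W : Type*} (R : W → W → Prop) (c : W) (A : Set W) : Prop :=
  (∀ d, R c d → d ∈ A → ∀ e, R d e → e ∈ A) ∧ (∃ e, R c e ∧ e ∈ A)

/-- B is a switch at c: □(◇s ∧ ◇¬s) holds at c under V(s) = B. -/
def IsSwitch {W : Type*} (R : W → W → Prop) (c : W) (B : Set W) : Prop :=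
  ∀ d, R c d → (∃ e, R d e ∧ e ∈ B) ∧ (∃ e, R d e ∧ e ∉ B)

/-- C is a B-restricted switch at c:
□(¬B → (◇(s ∧ ¬B) ∧ ◇(¬s ∧ ¬B))) holds at c under V(s) = C. -/
def RestrictedSwitch {W : Type*} (R : W → W → Prop) (c : W) (B C : Set W) : Prop :=
  ∀ d, R c d → d ∉ B →
    (∃ e, R d e ∧ e ∈ C ∧ e ∉ B) ∧ (∃ e, R d e ∧ e ∉ C ∧ e ∉ B)

/-- Independence of unpushed pure buttons A and switches B at c. -/
def Independent {W : Type*} (R : W → W → Prop) (c : W) {n m : ℕ}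
    (A : Fin n → Set W) (B : Fin m → Set W) : Prop :=
  ∀ (I₀ I₁ : Set (Fin n)) (J₀ J₁ : Set (Fin m)), I₀ ⊆ I₁ →
    ∀ d, R c d →
      ((∀ i, i ∈ I₀ ↔ d ∈ A i) ∧ (∀ j, j ∈ J₀ ↔ d ∈ B j)) →
      ∃ e, R d e ∧ (∀ i, i ∈ I₁ ↔ e ∈ A i) ∧ (∀ j, j ∈ J₁ ↔ e ∈ B j)

/-- Independence until B of pure buttons A and B-restricted switches C at c. -/
def IndependentUntil {W : Type*} (R : W → W → Prop) (c : W) (Bb : Set W) {n m : ℕ}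
    (A : Fin n → Set W) (C : Fin m → Set W) : Prop :=
  ∀ (I₀ I₁ : Set (Fin n)) (J₀ J₁ : Set (Fin m)), I₀ ⊆ I₁ →
    ∀ d, R c d →
      ((∀ i, i ∈ I₀ ↔ d ∈ A i) ∧ (∀ j, j ∈ J₀ ↔ d ∈ C j) ∧ d ∉ Bb) →
      ∃ e, R d e ∧ (∀ i, i ∈ I₁ ↔ e ∈ A i) ∧ (∀ j, j ∈ J₁ ↔ e ∈ C j) ∧ e ∉ Bb

/-- (L, Rr) is a decision at c: a pair of mutually exclusive unpushed pure weak buttons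
whose union is an unpushed pure button, with □(¬l ∨ ¬r) and □((◇l ∧ ◇r) ∨ l ∨ r) at c. -/
def Decision {W : Type*} (R : W → W → Prop) (c : W) (L Rr : Set W) : Prop :=
  PureWeakButton R c L ∧ c ∉ L ∧
  PureWeakButton R c Rr ∧ c ∉ Rr ∧
  PureButton R c (L ∪ Rr) ∧ c ∉ L ∪ Rr ∧
  (∀ d, R c d → ¬(d ∈ L ∧ d ∈ Rr)) ∧
  (∀ d, R c d → (((∃ e, R d e ∧ e ∈ L) ∧ (∃ e, R d e ∧ e ∈ Rr)) ∨ d ∈ L ∨ d ∈ Rr))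

/-- Independence of decisions at c. -/
def IndependentDecisions {W : Type*} (R : W → W → Prop) (c : W) {n : ℕ}
    (L Rr : Fin n → Set W) : Prop :=
  ∀ (I₀ I₁ J₀ J₁ : Set (Fin n)), I₀ ⊆ I₁ → J₀ ⊆ J₁ → (∀ i ∈ J₁, i ∉ I₁) →
    ∀ d, R c d →
      ((∀ i, i ∈ I₀ ↔ d ∈ L i) ∧ (∀ i, i ∈ J₀ ↔ d ∈ Rr i)) →
      ∃ e, R d e ∧ (∀ i, i ∈ I₁ ↔ e ∈ L i) ∧ (∀ i, i ∈ J₁ ↔ e ∈ Rr i)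

/-! Refinement `⇝` is a preorder on `FinAbs T`, and any two finite abstractions of `T` have a
common finite refinement inside `FinAbs T` (the image of `T` in the product of their state
spaces), so the underlying Kripke frame is reflexive, transitive and directed, hence an S4.2
frame. S4.2 is therefore valid under all valuations, in particular under the CTL-admissible
ones. -/

namespace MF

variable {W : Type*} (R : W → W → Prop) (V : ℕ → Set W)

lemma sat_imp (φ ψ : MF) (w : W) : Sat R V (φ.imp ψ) w ↔ (Sat R V φ w → Sat R V ψ w) := by
  simp only [imp, Sat]
  tauto

lemma sat_box (φ : MF) (w : W) : Sat R V φ.box w ↔ ∀ v, R w v → Sat R V φ v := by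
  simp only [box, Sat, not_exists, not_and, not_not]

lemma sat_subst (σ : ℕ → MF) (φ : MF) (w : W) :
    Sat R V (φ.subst σ) w ↔ Sat R (fun p => {v | Sat R V (σ p) v}) φ w := by
  induction φ generalizing w with
  | top => simp only [subst, Sat]
  | var p => rfl
  | and φ ψ ihφ ihψ => simp only [subst, Sat, ihφ, ihψ]
  | neg φ ihφ => simp only [subst, Sat, ihφ]
  | dia φ ihφ => simp only [subst, Sat, ihφ]

end MF

section FrameLogic

variable {W : Type*} (R : W → W → Prop)

def frameLogic : Set MF := {φ | ∀ V w, MF.Sat R V φ w}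

lemma isNormal_frameLogic : IsNormal (frameLogic R) := by
  refine ⟨?_, ?_, ?_, ?_, ?_⟩
  · intro φ hφ V w
    exact hφ (fun ψ => MF.Sat R V ψ w) ⟨trivial, fun _ _ => Iff.rfl, fun _ => Iff.rfl⟩
  · intro V w
    simp only [axK, MF.sat_imp, MF.sat_box]
    exact fun hpq hp v hv => hpq v hv (hp v hv)
  · intro φ ψ hφ hφψ V w
    exact (MF.sat_imp R V φ ψ w).mp (hφψ V w) (hφ V w)
  · intro φ σ hφ V w
    exact (MF.sat_subst R V σ φ w).mpr (hφ _ w)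
  · intro φ hφ V w
    exact (MF.sat_box R V φ w).mpr fun v _ => hφ V v

variable {R}

lemma axT_mem_frameLogic (hR : ∀ w, R w w) : axT ∈ frameLogic R := by
  intro V w
  rw [axT, MF.sat_imp]
  exact fun hw => ⟨w, hR w, hw⟩

lemma ax4_mem_frameLogic (hR : ∀ a b c, R a b → R b c → R a c) : ax4 ∈ frameLogic R := by
  intro V w
  rw [ax4, MF.sat_imp]
  rintro ⟨v, hwv, u, hvu, hu⟩
  exact ⟨u, hR w v u hwv hvu, hu⟩

lemma axDot2_mem_frameLogic (hR : ∀ a b c, R a b → R a c → Relation.Join R b c) :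
    axDot2 ∈ frameLogic R := by
  intro V w
  rw [axDot2, MF.sat_imp, MF.sat_box]
  rintro ⟨v, hwv, hv⟩ u hwu
  obtain ⟨d, hvd, hud⟩ := hR w v u hwv hwu
  exact ⟨d, hud, (MF.sat_box R V _ v).mp hv d hvd⟩

lemma KPlus_subset {Γ L : Set MF} (hL : IsNormal L) (hΓ : Γ ⊆ L) : KPlus Γ ⊆ L :=
  Set.sInter_subset_of_mem ⟨hL, hΓ⟩

lemma S4Dot2_subset_frameLogic (hrefl : ∀ w, R w w)
    (htrans : ∀ a b c, R a b → R b c → R a c)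
    (hconf : ∀ a b c, R a b → R a c → Relation.Join R b c) : S4Dot2 ⊆ frameLogic R := by
  refine KPlus_subset (isNormal_frameLogic R) ?_
  rintro φ (rfl | rfl | rfl)
  · exact axT_mem_frameLogic hrefl
  · exact ax4_mem_frameLogic htrans
  · exact axDot2_mem_frameLogic hconf

end FrameLogic

section Abstraction

variable {AP : Type}

lemma IsAbstractionMap.id (S : TS AP) : IsAbstractionMap S S id := by
  refine ⟨Function.surjective_id, fun _ => rfl, fun a b => ?_, (Set.image_id _).symm⟩
  exact ⟨fun h => ⟨a, b, h, rfl, rfl⟩, by rintro ⟨s, t, h, rfl, rfl⟩; exact h⟩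

lemma IsAbstractionMap.comp {T₁ T₂ T₃ : TS AP} {f : T₂.State → T₁.State}
    {g : T₃.State → T₂.State} (hf : IsAbstractionMap T₁ T₂ f) (hg : IsAbstractionMap T₂ T₃ g) :
    IsAbstractionMap T₁ T₃ (f ∘ g) := by
  obtain ⟨hfs, hfl, hfr, hfi⟩ := hf
  obtain ⟨hgs, hgl, hgr, hgi⟩ := hg
  refine ⟨hfs.comp hgs, fun s => (hfl (g s)).trans (hgl s), fun a b => ?_, ?_⟩
  · rw [hfr]
    constructor
    · rintro ⟨s, t, hst, rfl, rfl⟩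
      obtain ⟨u, v, huv, rfl, rfl⟩ := (hgr s t).mp hst
      exact ⟨u, v, huv, rfl, rfl⟩
    · rintro ⟨u, v, huv, rfl, rfl⟩
      exact ⟨g u, g v, (hgr _ _).mpr ⟨u, v, huv, rfl, rfl⟩, rfl, rfl⟩
  · rw [hfi, hgi, Set.image_image]
    rfl

lemma IsAbstractionMap.of_comp {T₁ T₂ T₃ : TS AP} {f : T₂.State → T₁.State}
    {g : T₃.State → T₂.State} (hfg : IsAbstractionMap T₁ T₃ (f ∘ g))
    (hg : IsAbstractionMap T₂ T₃ g) : IsAbstractionMap T₁ T₂ f := by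
  obtain ⟨hfgs, hfgl, hfgr, hfgi⟩ := hfg
  obtain ⟨hgs, hgl, hgr, hgi⟩ := hg
  refine ⟨Function.Surjective.of_comp hfgs, fun s => ?_, fun a b => ?_, ?_⟩
  · obtain ⟨u, rfl⟩ := hgs s
    exact (hfgl u).trans (hgl u).symm
  · rw [hfgr]
    constructor
    · rintro ⟨u, v, huv, rfl, rfl⟩
      exact ⟨g u, g v, (hgr _ _).mpr ⟨u, v, huv, rfl, rfl⟩, rfl, rfl⟩
    · rintro ⟨s, t, hst, rfl, rfl⟩
      obtain ⟨u, v, huv, rfl, rfl⟩ := (hgr s t).mp hst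
      exact ⟨u, v, huv, rfl, rfl⟩
  · rw [hfgi, hgi, Set.image_image]
    rfl

lemma abs_refl (S : TS AP) : Abs S S := ⟨id, IsAbstractionMap.id S⟩

lemma abs_trans {T₁ T₂ T₃ : TS AP} (h₁₂ : Abs T₁ T₂) (h₂₃ : Abs T₂ T₃) : Abs T₁ T₃ :=
  let ⟨f, hf⟩ := h₁₂
  let ⟨g, hg⟩ := h₂₃
  ⟨f ∘ g, hf.comp hg⟩

/-- A state of the image takes the label of an arbitrarily chosen preimage; this is
well defined when `T.label` is constant on the fibres of `g`. -/
noncomputable def TS.image {X : Type} (T : TS AP) (g : T.State → X) : TS AP where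
  State := Set.range g
  rel z z' := ∃ s t, T.rel s t ∧ Set.rangeFactorization g s = z ∧ Set.rangeFactorization g t = z'
  init := Set.rangeFactorization g '' T.init
  label z := T.label z.2.choose
  nonempty := ⟨Set.rangeFactorization g (Classical.choice T.nonempty)⟩
  serial z := by
    obtain ⟨s, rfl⟩ := Set.rangeFactorization_surjective z
    obtain ⟨t, hst⟩ := T.serial s
    exact ⟨_, s, t, hst, rfl, rfl⟩

lemma isAbstractionMap_image {X : Type} (T : TS AP) (g : T.State → X)
    (hg : ∀ s t, g s = g t → T.label s = T.label t) :
    IsAbstractionMap (T.image g) T (Set.rangeFactorization g) :=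
  ⟨Set.rangeFactorization_surjective, fun s => hg _ s (Set.rangeFactorization g s).2.choose_spec,
    fun _ _ => Iff.rfl, rfl⟩

lemma exists_finite_common_refinement {T S₁ S₂ : TS AP} [Finite S₁.State] [Finite S₂.State]
    (h₁ : Abs S₁ T) (h₂ : Abs S₂ T) :
    ∃ Z : TS AP, Finite Z.State ∧ Abs Z T ∧ Abs S₁ Z ∧ Abs S₂ Z := by
  obtain ⟨f₁, hf₁⟩ := h₁
  obtain ⟨f₂, hf₂⟩ := h₂
  let g : T.State → S₁.State × S₂.State := fun s => (f₁ s, f₂ s)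
  have hg : IsAbstractionMap (T.image g) T (Set.rangeFactorization g) := by
    refine isAbstractionMap_image T g fun s t hst => ?_
    have hf₁st : f₁ s = f₁ t := congrArg Prod.fst hst
    rw [← hf₁.2.1 s, ← hf₁.2.1 t, hf₁st]
  exact ⟨T.image g, Subtype.finite, ⟨_, hg⟩,
    ⟨fun z => z.1.1, IsAbstractionMap.of_comp (g := Set.rangeFactorization g) hf₁ hg⟩,
    ⟨fun z => z.1.2, IsAbstractionMap.of_comp (g := Set.rangeFactorization g) hf₂ hg⟩⟩

end Abstraction

/-- For every transition system T, S4.2 ⊆ MLAR^fin_T. -/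
theorem stmt_0 (AP : Type) (T : TS AP) : S4Dot2 ⊆ MLARfin T := by
  intro φ hφ S V _
  refine S4Dot2_subset_frameLogic (R := refRel (FinAbs T)) (fun A => abs_refl A.1)
    (fun _ _ _ hAB hBC => abs_trans hAB hBC) ?_ hφ V S
  rintro - ⟨B, hBfin, hBT⟩ ⟨C, hCfin, hCT⟩ - -
  obtain ⟨Z, hZfin, hZT, hBZ, hCZ⟩ := exists_finite_common_refinement hBT hCT
  exact ⟨⟨Z, hZfin, hZT⟩, hBZ, hCZ⟩

end MLAR
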